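/- arXiv:1312.3412 — 2 statements merged into one kernel-verified Lean document; each statement's English description precedes it below -/
import Mathlib

section
/- If Player 2 has a winning strategy in the Wadge game W(L, L'), then L is Wadge reducible to L', i.e., there exists a continuous function f : X^ω → Y^ω with L = f^{-1}(L'). -/
/-- In the Wadge game `W(L,L')`, a move of Player 2 is a letter of `Y` or a skip,
encoded as `Option Y` with `none` meaning skip.

`Extract o b` says that the infinite word `b` is the word obtained from the
sequence `o` of moves of Player 2 by deleting the skips (in particular Player 2
has really written an infinite word). -/
def Extract {Y : Type*} (o : ℕ → Option Y) (b : ℕ → Y) : Prop :=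
  ∃ m : ℕ → ℕ, StrictMono m ∧ (∀ k, o (m k) = some (b k)) ∧
    ∀ n, (o n).isSome → ∃ k, m k = n

/-- Player 2 wins the play in which Player 1 has written the infinite word `a`
and Player 2 has played the sequence of moves `o` iff, deleting the skips,
Player 2 has written an infinite word `b` with `a ∈ L ↔ b ∈ L'`. -/
def P2WinsPlay {X Y : Type*} (L : Set (ℕ → X)) (L' : Set (ℕ → Y))
    (a : ℕ → X) (o : ℕ → Option Y) : Prop :=
  ∃ b : ℕ → Y, Extract o b ∧ (a ∈ L ↔ b ∈ L')

/-- The sequence of moves of Player 2 following strategy `τ : X⁺ → Y ∪ {s}`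
against the word `a` of Player 1: the `n`-th move answers the first `n+1`
letters of `a`. -/
def rawPlay {X Y : Type*} (τ : List X → Option Y) (a : ℕ → X) : ℕ → Option Y :=
  fun n => τ ((List.range (n + 1)).map a)

/-- `τ` is a winning strategy for Player 2 in the Wadge game `W(L,L')`. -/
def P2WinningStrategy {X Y : Type*} (L : Set (ℕ → X)) (L' : Set (ℕ → Y))
    (τ : List X → Option Y) : Prop :=
  ∀ a : ℕ → X, P2WinsPlay L L' a (rawPlay τ a)

/-- `σ : (Y ∪ {s})* → X` is a winning strategy for Player 1 in the Wadge game
`W(L,L')`: against any sequence of moves `o` of Player 2, the word `a` built by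
Player 1 following `σ` (its `n`-th letter answers the first `n` moves of
Player 2) defeats Player 2. -/
def P1WinningStrategy {X Y : Type*} (L : Set (ℕ → X)) (L' : Set (ℕ → Y))
    (σ' : List (Option Y) → X) : Prop :=
  ∀ o : ℕ → Option Y,
    ¬ P2WinsPlay L L' (fun n => σ' ((List.range n).map o)) o

lemma extract_eq_of_agree {Y : Type*} {o o' : ℕ → Option Y} {b b' : ℕ → Y}
    {m m' : ℕ → ℕ} (hm : StrictMono m) (hmo : ∀ k, o (m k) = some (b k))
    (hsur : ∀ n, (o n).isSome → ∃ k, m k = n)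
    (hm' : StrictMono m') (hmo' : ∀ k, o' (m' k) = some (b' k))
    (hsur' : ∀ n, (o' n).isSome → ∃ k, m' k = n)
    {M : ℕ} (hoo : ∀ n, n ≤ M → o n = o' n) :
    ∀ k, m k ≤ M → m' k = m k ∧ b' k = b k := by
  intro k
  induction k using Nat.strong_induction_on with
  | _ k ih =>
    intro hk
    have hmm : ∀ j, j < k → m' j = m j := fun j hj =>
      (ih j hj (le_trans (hm.monotone hj.le) hk)).1
    have h1 : m' k ≤ m k := by
      have hs : (o' (m k)).isSome := by
        rw [← hoo _ hk, hmo k]; rfl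
      obtain ⟨i, hi⟩ := hsur' _ hs
      rcases lt_or_ge i k with h | h
      · exfalso
        have h3 := hmm i h
        have h4 : m i < m k := hm h
        omega
      · exact le_trans (hm'.monotone h) hi.le
    have h2 : m k ≤ m' k := by
      have hs : (o (m' k)).isSome := by
        rw [hoo _ (le_trans h1 hk), hmo' k]; rfl
      obtain ⟨i, hi⟩ := hsur _ hs
      rcases lt_or_ge i k with h | h
      · exfalso
        have h3 := hmm i h
        have h4 : m' i < m' k := hm' h
        omega
      · exact le_trans (hm.monotone h) hi.le
    have heq : m' k = m k := le_antisymm h1 h2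
    refine ⟨heq, ?_⟩
    have hss : some (b' k) = some (b k) := by
      rw [← hmo' k, heq, ← hoo _ hk, hmo k]
    exact Option.some_injective _ hss

theorem wadgeRed_of_p2_winning {X Y : Type*} [Fintype X] [Fintype Y]
    [TopologicalSpace X] [DiscreteTopology X] [TopologicalSpace Y] [DiscreteTopology Y]
    (L : Set (ℕ → X)) (L' : Set (ℕ → Y))
    (τ : List X → Option Y) (hτ : P2WinningStrategy L L' τ) :
    ∃ f : (ℕ → X) → (ℕ → Y), Continuous f ∧ L = f ⁻¹' L' := by
  classical
  have hspec : ∀ a, Extract (rawPlay τ a) ((hτ a).choose) ∧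
      (a ∈ L ↔ (hτ a).choose ∈ L') := fun a => (hτ a).choose_spec
  refine ⟨fun a => (hτ a).choose, ?_, ?_⟩
  · apply continuous_pi
    intro k
    rw [continuous_iff_continuousAt]
    intro a
    obtain ⟨⟨m, hm, hmo, hsur⟩, -⟩ := hspec a
    set U : Set (ℕ → X) := {a' | ∀ i < m k + 1, a' i = a i} with hUdef
    have hUopen : IsOpen U := by
      have : U = ⋂ i ∈ Finset.range (m k + 1), (fun a' : ℕ → X => a' i) ⁻¹' {a i} := by
        ext a'
        simp [hUdef]
      rw [this]
      exact isOpen_biInter_finset fun i _ =>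
        (continuous_apply i).isOpen_preimage _ (isOpen_discrete _)
    have hUmem : U ∈ nhds a := hUopen.mem_nhds (fun i _ => rfl)
    have key : ∀ a' ∈ U, (hτ a').choose k = (hτ a).choose k := by
      intro a' ha'
      obtain ⟨⟨m', hm', hmo', hsur'⟩, -⟩ := hspec a'
      have hoo : ∀ n, n ≤ m k → rawPlay τ a n = rawPlay τ a' n := by
        intro n hn
        unfold rawPlay
        congr 1
        refine List.map_congr_left fun i hi => ?_
        rw [List.mem_range] at hi
        exact (ha' i (by omega)).symm
      exact (extract_eq_of_agree hm hmo hsur hm' hmo' hsur' hoo k le_rfl).2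
    have : Filter.Tendsto (fun a' => (hτ a').choose k) (nhds a)
        (pure ((hτ a).choose k)) := by
      rw [Filter.tendsto_pure]
      exact Filter.mem_of_superset hUmem key
    simpa [ContinuousAt, nhds_discrete] using this
  · ext a
    exact (hspec a).2
end

section
/- Every analytic subset of the Cantor space Σ^ω over a finite alphabet Σ (with at least two letters) is either Π⁰₂-hard or a Σ⁰₂ set. -/
/-!
Write `A = range h` with `h : (ℕ → ℕ) → (ℕ → α)` continuous, and suppose `A` is not Fσ. Call
`x ∉ A` critical for `N` if no neighbourhood `U` of `x` has `U ∩ N` covered by an Fσ subset of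
`A`. By Lindelöf, a set `N` not covered by an Fσ subset of `A` has a critical point. Splitting
`h '' cylinder y k` into the countably many images of the subcylinders of length `k + 1`, a
critical point can be refined to a critical point for a subcylinder, as close to the old one as
we like. Along a bit sequence `b`, keep the critical point on `false` and refine on `true`: the
points converge to some `g b`, which is the eventual critical point (outside `A`) if `b` has
finitely many `true`s, and `h y` for the limit `y` of the stems otherwise. So the Π⁰₂-complete
set of sequences with infinitely many `true`s reduces to `A`, and every Gδ set reduces to it.
-/

open Set Filter Topology PiNat

section FσSeparation

variable {Z : Type*} [TopologicalSpace Z] {s t A N N' : Set Z} {x : Z}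

def IsFσ (s : Set Z) : Prop := IsGδ sᶜ

theorem isFσ_iff_eq_iUnion_nat :
    IsFσ s ↔ ∃ C : ℕ → Set Z, (∀ n, IsClosed (C n)) ∧ s = ⋃ n, C n := by
  rw [IsFσ, isGδ_iff_eq_iInter_nat]
  constructor
  · rintro ⟨U, hU, hs⟩
    exact ⟨fun n ↦ (U n)ᶜ, fun n ↦ (hU n).isClosed_compl, by rw [← compl_iInter, ← hs, compl_compl]⟩
  · rintro ⟨C, hC, rfl⟩
    exact ⟨fun n ↦ (C n)ᶜ, fun n ↦ (hC n).isOpen_compl, compl_iUnion C⟩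

theorem IsClosed.isFσ (hs : IsClosed s) : IsFσ s := hs.isOpen_compl.isGδ

theorem IsFσ.union (hs : IsFσ s) (ht : IsFσ t) : IsFσ (s ∪ t) := by
  rw [IsFσ, compl_union]; exact hs.inter ht

theorem IsFσ.iUnion {ι : Sort*} [Countable ι] {s : ι → Set Z} (hs : ∀ i, IsFσ (s i)) :
    IsFσ (⋃ i, s i) := by
  rw [IsFσ, compl_iUnion]; exact .iInter hs

def FσBetween (N A : Set Z) : Prop := ∃ S, IsFσ S ∧ N ⊆ S ∧ S ⊆ A

theorem FσBetween.mono_left (hN : N' ⊆ N) : FσBetween N A → FσBetween N' A :=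
  fun ⟨S, hS, hNS, hSA⟩ ↦ ⟨S, hS, hN.trans hNS, hSA⟩

theorem fσBetween_self_iff : FσBetween A A ↔ IsFσ A :=
  ⟨fun ⟨_, hS, hAS, hSA⟩ ↦ hSA.antisymm hAS ▸ hS, fun hA ↦ ⟨A, hA, subset_rfl, subset_rfl⟩⟩

theorem fσBetween_empty : FσBetween ∅ A :=
  ⟨∅, isClosed_empty.isFσ, subset_rfl, empty_subset A⟩

theorem fσBetween_iUnion {ι : Sort*} [Countable ι] {N : ι → Set Z}
    (h : ∀ i, FσBetween (N i) A) : FσBetween (⋃ i, N i) A := by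
  choose S hS hNS hSA using h
  exact ⟨⋃ i, S i, .iUnion hS, iUnion_mono hNS, iUnion_subset hSA⟩

def IsCritical (A N : Set Z) (x : Z) : Prop := x ∉ A ∧ ∀ U ∈ 𝓝 x, ¬ FσBetween (U ∩ N) A

theorem IsCritical.mono (hN : N ⊆ N') (hx : IsCritical A N x) : IsCritical A N' x :=
  ⟨hx.1, fun U hU h ↦ hx.2 U hU (h.mono_left (inter_subset_inter_right U hN))⟩

theorem IsCritical.inter_nonempty (hx : IsCritical A N x) {U : Set Z} (hU : U ∈ 𝓝 x) :
    (U ∩ N).Nonempty :=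
  nonempty_iff_ne_empty.2 fun h ↦ hx.2 U hU (h ▸ fσBetween_empty)

theorem IsCritical.mem_closure (hx : IsCritical A N x) : x ∈ closure N :=
  mem_closure_iff_nhds.2 fun _ ↦ hx.inter_nonempty

/-- Otherwise, by Lindelöf, the union `W` of the open `U` with `FσBetween (U ∩ N) A` is a
countable such union, and `Wᶜ` is a closed subset of `A`. -/
theorem exists_isCritical [SecondCountableTopology Z] (hN : ¬ FσBetween N A) :
    ∃ x, IsCritical A N x := by
  by_contra! hcrit
  obtain ⟨T, hTc, hTsub, hTW⟩ :=
    TopologicalSpace.isOpen_sUnion_countable {U : Set Z | IsOpen U ∧ FσBetween (U ∩ N) A}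
      fun U hU ↦ hU.1
  have hWN : FσBetween (⋃₀ T ∩ N) A := by
    rw [sUnion_eq_biUnion, iUnion₂_inter, biUnion_eq_iUnion]
    have := hTc.to_subtype
    exact fσBetween_iUnion fun U ↦ (hTsub U.2).2
  have hWA : (⋃₀ T)ᶜ ⊆ A := by
    intro x hxW
    by_contra hxA
    obtain ⟨U, hU, hUN⟩ : ∃ U ∈ 𝓝 x, FσBetween (U ∩ N) A := by
      simpa [IsCritical, hxA] using hcrit x
    obtain ⟨V, hVU, hV, hxV⟩ := mem_nhds_iff.1 hU
    exact hxW (hTW ▸ ⟨V, ⟨hV, hUN.mono_left (inter_subset_inter_left N hVU)⟩, hxV⟩)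
  obtain ⟨S, hS, hWNS, hSA⟩ := hWN
  refine hN ⟨(⋃₀ T)ᶜ ∪ S, (isOpen_sUnion fun U hU ↦ (hTsub hU).1).isClosed_compl.isFσ.union hS,
    fun x hx ↦ ?_, union_subset hWA hSA⟩
  by_cases hxW : x ∈ ⋃₀ T
  · exact Or.inr (hWNS ⟨hxW, hx⟩)
  · exact Or.inl hxW

end FσSeparation

theorem tendsto_atTop_iff_frequently_of_succ {c : ℕ → ℕ} {p : ℕ → Prop} [DecidablePred p]
    (hc : ∀ n, c (n + 1) = c n + if p n then 1 else 0) :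
    Tendsto c atTop atTop ↔ ∃ᶠ n in atTop, p n := by
  have hmono : Monotone c := monotone_nat_of_le_succ fun n ↦ (hc n).symm ▸ Nat.le_add_right _ _
  constructor
  · intro hlim
    refine frequently_atTop.2 fun N ↦ ?_
    by_contra! hN
    have hconst : ∀ n ≥ N, c n = c N := fun n hn ↦ by
      induction n, hn using Nat.le_induction with
      | base => rfl
      | succ n hNn ih => rw [hc, if_neg (hN n hNn), ih, add_zero]
    obtain ⟨n, hn, hNn⟩ := ((hlim.eventually_gt_atTop (c N)).and (eventually_ge_atTop N)).exists
    exact hn.ne' (hconst n hNn)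
  · intro hp
    refine tendsto_atTop_atTop_of_monotone hmono fun K ↦ ?_
    induction K with
    | zero => exact ⟨0, Nat.zero_le _⟩
    | succ K ih =>
      obtain ⟨n, hn⟩ := ih
      obtain ⟨m, hnm, hm⟩ := frequently_atTop.1 hp n
      exact ⟨m + 1, by rw [hc, if_pos hm]; have := hmono hnm; omega⟩

namespace PiNat

variable {E : ℕ → Type*}

theorem mem_cylinder_of_le {z : ℕ → ∀ i, E i} {k : ℕ → ℕ} (hk : Monotone k)
    (hz : ∀ n, z (n + 1) ∈ cylinder (z n) (k n)) {n n' : ℕ} (hnn' : n ≤ n') :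
    z n' ∈ cylinder (z n) (k n) := by
  induction n', hnn' using Nat.le_induction with
  | base => exact self_mem_cylinder _ _
  | succ m hnm ih => exact fun i hi ↦ (hz m i (hi.trans_le (hk hnm))).trans (ih i hi)

theorem exists_forall_mem_cylinder {z : ℕ → ∀ i, E i} {k : ℕ → ℕ} (hk : Monotone k)
    (hk' : Tendsto k atTop atTop) (hz : ∀ n, z (n + 1) ∈ cylinder (z n) (k n)) :
    ∃ w, ∀ n, w ∈ cylinder (z n) (k n) := by
  choose N hN using fun i ↦ (hk'.eventually_gt_atTop i).exists
  refine ⟨fun i ↦ z (N i) i, fun n i hi ↦ ?_⟩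
  calc z (N i) i = z (max n (N i)) i := (mem_cylinder_of_le hk hz (le_max_right _ _) i (hN i)).symm
    _ = z n i := mem_cylinder_of_le hk hz (le_max_left _ _) i hi

theorem eq_of_eventually_mem_cylinder {x z : ∀ i, E i}
    (h : ∀ᶠ n in atTop, x ∈ cylinder z n) : x = z := by
  funext i
  obtain ⟨n, hn, hin⟩ := (h.and (eventually_gt_atTop i)).exists
  exact hn i hin

variable [∀ i, TopologicalSpace (E i)] [∀ i, DiscreteTopology (E i)]

theorem exists_cylinder_subset_of_mem_nhds {x : ∀ i, E i} {U : Set (∀ i, E i)} (hU : U ∈ 𝓝 x) :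
    ∃ n, cylinder x n ⊆ U := by
  obtain ⟨_, ⟨y, n, rfl⟩, hxy, hsub⟩ := (isTopologicalBasis_cylinders E).mem_nhds_iff.1 hU
  exact ⟨n, mem_cylinder_iff_eq.1 hxy ▸ hsub⟩

theorem cylinder_mem_nhds (x : ∀ i, E i) (n : ℕ) : cylinder x n ∈ 𝓝 x :=
  (isOpen_cylinder E x n).mem_nhds (self_mem_cylinder x n)

theorem isClosed_cylinder (x : ∀ i, E i) (n : ℕ) : IsClosed (cylinder x n) := by
  rw [cylinder_eq_pi]
  exact isClosed_set_pi fun i _ ↦ isClosed_discrete _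

theorem continuous_of_forall_exists_cylinder {γ : Type*} [TopologicalSpace γ] [DiscreteTopology γ]
    {f : (∀ i, E i) → ℕ → γ} (hf : ∀ x n, ∃ m, ∀ y ∈ cylinder x m, f y n = f x n) :
    Continuous f := by
  refine continuous_pi fun n ↦ IsLocallyConstant.continuous ?_
  refine (IsLocallyConstant.iff_exists_open _).2 fun x ↦ ?_
  obtain ⟨m, hm⟩ := hf x n
  exact ⟨cylinder x m, isOpen_cylinder E x m, self_mem_cylinder x m, fun y hy ↦ hm y hy⟩

end PiNat

section GδReduction

variable {Y : Type*} (U : ℕ → Set (ℕ → Y))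

open Classical in
/-- The number of sets `U 0, U 1, …` certified, within `n` steps, to contain a cylinder around
`x`: step `n` tests the cylinder of length `n` against the first uncertified set. -/
noncomputable def gδCounter (x : ℕ → Y) : ℕ → ℕ
  | 0 => 0
  | n + 1 => gδCounter x n + if cylinder x n ⊆ U (gδCounter x n) then 1 else 0

theorem gδCounter_congr {x y : ℕ → Y} {n : ℕ} (hy : y ∈ cylinder x n) :
    gδCounter U y n = gδCounter U x n := by
  induction n with
  | zero => rfl
  | succ n ih =>
    have hyn : y ∈ cylinder x n := cylinder_anti x n.le_succ hy
    rw [gδCounter, gδCounter, ih hyn, mem_cylinder_iff_eq.1 hyn]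

theorem mem_of_lt_gδCounter {x : ℕ → Y} {k n : ℕ} (hk : k < gδCounter U x n) : x ∈ U k := by
  induction n with
  | zero => exact absurd hk (Nat.not_lt_zero k)
  | succ n ih =>
    simp only [gδCounter] at hk
    split_ifs at hk with hcyl
    · rcases Nat.lt_succ_iff_lt_or_eq.1 hk with hk | rfl
      exacts [ih hk, hcyl (self_mem_cylinder x n)]
    · exact ih (by simpa using hk)

variable [TopologicalSpace Y] [DiscreteTopology Y]

theorem frequently_gδCounter_step {x : ℕ → Y} (hU : ∀ k, IsOpen (U k)) (hx : ∀ k, x ∈ U k) :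
    ∃ᶠ n in atTop, cylinder x n ⊆ U (gδCounter U x n) := by
  refine frequently_atTop.2 fun N ↦ ?_
  by_contra! hN
  have hconst : ∀ n ≥ N, gδCounter U x n = gδCounter U x N := fun n hn ↦ by
    induction n, hn using Nat.le_induction with
    | base => rfl
    | succ n hNn ih => rw [gδCounter, if_neg (hN n hNn), ih, add_zero]
  obtain ⟨m, hm⟩ := exists_cylinder_subset_of_mem_nhds ((hU _).mem_nhds (hx (gδCounter U x N)))
  refine hN (max N m) (le_max_left _ _) ?_
  rw [hconst _ (le_max_left _ _)]
  exact (cylinder_anti x (le_max_right _ _)).trans hm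

theorem IsGδ.exists_continuous_preimage_frequently {E : Set (ℕ → Y)} (hE : IsGδ E) :
    ∃ r : (ℕ → Y) → ℕ → Bool, Continuous r ∧ E = r ⁻¹' {b | ∃ᶠ n in atTop, b n = true} := by
  classical
  obtain ⟨U, hU, rfl⟩ := isGδ_iff_eq_iInter_nat.1 hE
  refine ⟨fun x n ↦ decide (cylinder x n ⊆ U (gδCounter U x n)), ?_, ?_⟩
  · refine continuous_of_forall_exists_cylinder fun x n ↦ ⟨n, fun y hy ↦ ?_⟩
    simp only [gδCounter_congr U hy, mem_cylinder_iff_eq.1 hy]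
  · ext x
    simp only [mem_iInter, mem_preimage, mem_ofPred_eq, decide_eq_true_eq]
    refine ⟨frequently_gδCounter_step U hU, fun hfreq k ↦ ?_⟩
    have hlim := (tendsto_atTop_iff_frequently_of_succ (gδCounter.eq_2 U x)).2 hfreq
    obtain ⟨n, hn⟩ := (hlim.eventually_gt_atTop k).exists
    exact mem_of_lt_gδCounter U hn

end GδReduction

/-- `cylinder y k` is the countable union of the cylinders `cylinder (update y k j) (k + 1)`, so
one of them stays non-separable inside `C`; its critical points lie in `closure C = C`. -/
theorem IsCritical.exists_update {Z : Type*} [TopologicalSpace Z] [SecondCountableTopology Z]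
    {A C : Set Z} {h : (ℕ → ℕ) → Z} {y : ℕ → ℕ} {k : ℕ} {x : Z}
    (hx : IsCritical A (h '' cylinder y k) x) (hC : IsClosed C) (hCx : C ∈ 𝓝 x) :
    ∃ j x', IsCritical A (h '' cylinder (Function.update y k j) (k + 1)) x' ∧ x' ∈ C := by
  have hsplit := hx.2 C hCx
  rw [← iUnion_cylinder_update y k, image_iUnion, inter_iUnion] at hsplit
  obtain ⟨j, hj⟩ : ∃ j, ¬ FσBetween (C ∩ h '' cylinder (Function.update y k j) (k + 1)) A := by
    by_contra! hall
    exact hsplit (fσBetween_iUnion hall)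
  obtain ⟨x', hx'⟩ := exists_isCritical hj
  exact ⟨j, x', hx'.mono inter_subset_right,
    closure_minimal inter_subset_left hC hx'.mem_closure⟩

section Scheme

variable {α : Type*} [TopologicalSpace α] [DiscreteTopology α] [Countable α]
  {h : (ℕ → ℕ) → ℕ → α}

variable (h) in
structure CriticalNode where
  pt : ℕ → α
  stem : ℕ → ℕ
  len : ℕ
  isCritical : IsCritical (range h) (h '' cylinder stem len) pt

namespace CriticalNode

theorem exists_refine (v : CriticalNode h) (m : ℕ) :
    ∃ w : CriticalNode h, w.pt ∈ cylinder v.pt m ∧ w.stem ∈ cylinder v.stem v.len ∧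
      w.len = v.len + 1 := by
  obtain ⟨j, x', hx', hx'm⟩ :=
    v.isCritical.exists_update (isClosed_cylinder v.pt m) (cylinder_mem_nhds v.pt m)
  exact ⟨⟨x', _, _, hx'⟩, hx'm, update_mem_cylinder _ _ _, rfl⟩

noncomputable def refine (v : CriticalNode h) (m : ℕ) : CriticalNode h :=
  (v.exists_refine m).choose

theorem refine_spec (v : CriticalNode h) (m : ℕ) :
    (v.refine m).pt ∈ cylinder v.pt m ∧ (v.refine m).stem ∈ cylinder v.stem v.len ∧
      (v.refine m).len = v.len + 1 :=
  (v.exists_refine m).choose_spec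

noncomputable def scheme (v₀ : CriticalNode h) (b : ℕ → Bool) : ℕ → CriticalNode h
  | 0 => v₀
  | n + 1 => if b n then (scheme v₀ b n).refine n else scheme v₀ b n

variable (v₀ : CriticalNode h) (b : ℕ → Bool)

theorem scheme_pt_succ (n : ℕ) : (v₀.scheme b (n + 1)).pt ∈ cylinder (v₀.scheme b n).pt n := by
  rw [scheme]
  split_ifs
  exacts [(refine_spec _ n).1, self_mem_cylinder _ n]

theorem scheme_stem_succ (n : ℕ) :
    (v₀.scheme b (n + 1)).stem ∈ cylinder (v₀.scheme b n).stem (v₀.scheme b n).len := by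
  rw [scheme]
  split_ifs
  exacts [(refine_spec _ n).2.1, self_mem_cylinder _ _]

theorem scheme_len_succ (n : ℕ) :
    (v₀.scheme b (n + 1)).len = (v₀.scheme b n).len + if b n then 1 else 0 := by
  rw [scheme]
  split_ifs
  exacts [(refine_spec _ n).2.2, rfl]

theorem scheme_congr {b' : ℕ → Bool} {n : ℕ} (hb : b' ∈ cylinder b n) :
    v₀.scheme b' n = v₀.scheme b n := by
  induction n with
  | zero => rfl
  | succ n ih => rw [scheme, scheme, ih (cylinder_anti b n.le_succ hb), hb n n.lt_succ_self]

noncomputable def limitPoint (b : ℕ → Bool) : ℕ → α := fun i ↦ (v₀.scheme b (i + 1)).pt i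

theorem continuous_limitPoint : Continuous v₀.limitPoint :=
  continuous_of_forall_exists_cylinder fun b i ↦
    ⟨i + 1, fun b' hb' ↦ by simp only [limitPoint, scheme_congr v₀ b hb']⟩

theorem limitPoint_mem_cylinder (n : ℕ) : v₀.limitPoint b ∈ cylinder (v₀.scheme b n).pt n :=
  fun i hi ↦ (mem_cylinder_of_le monotone_id (scheme_pt_succ v₀ b) hi i i.lt_succ_self).symm

theorem limitPoint_notMem_range (hb : ¬ ∃ᶠ n in atTop, b n = true) :
    v₀.limitPoint b ∉ range h := by
  obtain ⟨N, hN⟩ := eventually_atTop.1 (not_frequently.1 hb)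
  have hconst : ∀ n ≥ N, v₀.scheme b n = v₀.scheme b N := fun n hn ↦ by
    induction n, hn using Nat.le_induction with
    | base => rfl
    | succ n hNn ih => rw [scheme, if_neg (hN n hNn), ih]
  have hlim : v₀.limitPoint b = (v₀.scheme b N).pt :=
    eq_of_eventually_mem_cylinder <| eventually_atTop.2
      ⟨N, fun n hn ↦ hconst n hn ▸ limitPoint_mem_cylinder v₀ b n⟩
  exact hlim ▸ (v₀.scheme b N).isCritical.1

/-- Every neighbourhood of the limit point meets every neighbourhood of `h y`, since the cells
`h '' cylinder stem len` of the critical nodes shrink to `h y`. -/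
theorem limitPoint_mem_range (hcont : Continuous h) (hb : ∃ᶠ n in atTop, b n = true) :
    v₀.limitPoint b ∈ range h := by
  let v := v₀.scheme b
  have hmono : Monotone fun n ↦ (v n).len :=
    monotone_nat_of_le_succ fun n ↦ (scheme_len_succ v₀ b n).symm ▸ Nat.le_add_right _ _
  have hlen : Tendsto (fun n ↦ (v n).len) atTop atTop :=
    (tendsto_atTop_iff_frequently_of_succ (scheme_len_succ v₀ b)).2 hb
  obtain ⟨y, hy⟩ := exists_forall_mem_cylinder hmono hlen (scheme_stem_succ v₀ b)
  refine ⟨y, eq_of_nhds_neBot (inf_neBot_iff.2 fun p hp q hq ↦ ?_)⟩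
  obtain ⟨j, hj⟩ := exists_cylinder_subset_of_mem_nhds (hcont.continuousAt.preimage_mem_nhds hp)
  obtain ⟨m, hm⟩ := exists_cylinder_subset_of_mem_nhds hq
  obtain ⟨n, hjn, hmn⟩ := ((hlen.eventually_ge_atTop j).and (eventually_ge_atTop m)).exists
  obtain ⟨_, hzn, z, hz, rfl⟩ := (v n).isCritical.inter_nonempty (cylinder_mem_nhds _ n)
  refine ⟨h z, hj ?_, hm ?_⟩
  · rw [← mem_cylinder_iff_eq.1 (hy n)] at hz
    exact cylinder_anti y hjn hz
  · rw [← mem_cylinder_iff_eq.1 (limitPoint_mem_cylinder v₀ b n)] at hzn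
    exact cylinder_anti _ hmn hzn

end CriticalNode

theorem exists_continuous_preimage_range_eq_frequently (hcont : Continuous h)
    (hh : ¬ IsFσ (range h)) :
    ∃ g : (ℕ → Bool) → ℕ → α, Continuous g ∧ g ⁻¹' range h = {b | ∃ᶠ n in atTop, b n = true} := by
  obtain ⟨x, hx⟩ := exists_isCritical (mt fσBetween_self_iff.1 hh)
  let v₀ : CriticalNode h := ⟨x, fun _ ↦ 0, 0, by simpa using hx⟩
  exact ⟨v₀.limitPoint, v₀.continuous_limitPoint, Set.ext fun b ↦
    ⟨fun hb ↦ by_contra fun hnot ↦ v₀.limitPoint_notMem_range b hnot hb,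
      v₀.limitPoint_mem_range b hcont⟩⟩

end Scheme

theorem analytic_pi02_hard_or_sigma02_general {α : Type} [Fintype α]
    [TopologicalSpace α] [DiscreteTopology α]
    (A : Set (ℕ → α)) (hA : MeasureTheory.AnalyticSet A) :
    (∀ (Y : Type) [Fintype Y] [TopologicalSpace Y] [DiscreteTopology Y]
        (E : Set (ℕ → Y)), IsGδ E →
        ∃ f : (ℕ → Y) → (ℕ → α), Continuous f ∧ E = f ⁻¹' A) ∨
      ∃ C : ℕ → Set (ℕ → α), (∀ n, IsClosed (C n)) ∧ A = ⋃ n, C n := by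
  by_cases hFσ : IsFσ A
  · exact Or.inr (isFσ_iff_eq_iUnion_nat.1 hFσ)
  left
  rw [MeasureTheory.AnalyticSet] at hA
  rcases hA with rfl | ⟨h, hcont, rfl⟩
  · exact (hFσ isClosed_empty.isFσ).elim
  obtain ⟨g, hg, hgA⟩ := exists_continuous_preimage_range_eq_frequently hcont hFσ
  intro Y _ _ _ E hE
  obtain ⟨r, hr, hrE⟩ := hE.exists_continuous_preimage_frequently
  exact ⟨g ∘ r, hg.comp hr, by rw [preimage_comp, hgA, hrE]⟩

theorem analytic_pi02_hard_or_sigma02 {α : Type} [Fintype α]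
    [TopologicalSpace α] [DiscreteTopology α] (hcard : 2 ≤ Fintype.card α)
    (A : Set (ℕ → α)) (hA : MeasureTheory.AnalyticSet A) :
    (∀ (Y : Type) [Fintype Y] [TopologicalSpace Y] [DiscreteTopology Y]
        (E : Set (ℕ → Y)), IsGδ E →
        ∃ f : (ℕ → Y) → (ℕ → α), Continuous f ∧ E = f ⁻¹' A) ∨
      ∃ C : ℕ → Set (ℕ → α), (∀ n, IsClosed (C n)) ∧ A = ⋃ n, C n :=
  analytic_pi02_hard_or_sigma02_general A hA
end
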